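/- arXiv:1512.06640 — 4 statements merged into one kernel-verified Lean document; each statement's English description precedes it below -/
import Mathlib

section
/- If μ₁, μ₂ ∈ M satisfy W∞(μ₁,μ₂) ≤ ε for some ε ≥ 0, then R_{μ₁}(x+ε) ≤ R_{μ₂}(x) ≤ R_{μ₁}(x−ε) for all x ∈ ℝ, and consequently |Eμ₁ − Eμ₂| ≤ ε. -/
open MeasureTheory Filter Set
open scoped ENNReal

/-- Call function `R_μ(x) = ∫ (y−x)⁺ μ(dy)`. -/
noncomputable def callFn (μ : Measure ℝ) (x : ℝ) : ℝ := ∫ y, max (y - x) 0 ∂μ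

/-- Mean `Eμ = ∫ y μ(dy)`. -/
noncomputable def meanM (μ : Measure ℝ) : ℝ := ∫ y, y ∂μ

/-- Distribution function `F_μ(x) = μ((−∞,x])`. -/
noncomputable def cdfM (μ : Measure ℝ) (x : ℝ) : ℝ := (μ (Set.Iic x)).toReal

/-- Membership in `M`: Borel probability measure on ℝ with finite first moment. -/
def MemM (μ : Measure ℝ) : Prop :=
  IsProbabilityMeasure μ ∧ Integrable (fun y => y) μ

/-- Convex order `μ ≤_c ν`. -/
def ConvexOrder (μ ν : Measure ℝ) : Prop :=
  ∀ φ : ℝ → ℝ, ConvexOn ℝ Set.univ φ → Integrable φ μ → Integrable φ ν →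
    ∫ y, φ y ∂μ ≤ ∫ y, φ y ∂ν

/-- Infinity Wasserstein distance via distribution functions, valued in `[0,∞]`,
with `inf ∅ = ∞`. -/
noncomputable def Winf (μ ν : Measure ℝ) : ℝ≥0∞ :=
  sInf (ENNReal.ofReal '' {ε : ℝ | 0 < ε ∧ ∀ x : ℝ,
    cdfM μ (x - ε) ≤ cdfM ν x ∧ cdfM ν x ≤ cdfM μ (x + ε)})

/-- Membership in the closed ball `B^∞(μ,ε)` (within `M`). -/
def InBallWinf (μ : Measure ℝ) (ε : ℝ) (ν : Measure ℝ) : Prop :=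
  MemM ν ∧ Winf μ ν ≤ ENNReal.ofReal ε

/-- `conv2 f g`: the largest convex function majorized by `min f g`, pointwise. -/
noncomputable def conv2 (f g : ℝ → ℝ) (x : ℝ) : ℝ :=
  sSup {z : ℝ | ∃ h : ℝ → ℝ, ConvexOn ℝ Set.univ h ∧ (∀ y, h y ≤ min (f y) (g y)) ∧ z = h x}

/-- `R^min_μ(x; m, ε)`. -/
noncomputable def RminW (μ : Measure ℝ) (m ε x : ℝ) : ℝ :=
  max (m + callFn μ (x - ε) - (meanM μ + ε)) (callFn μ (x + ε))

/-- `R^max_μ(x; m, ε)`. -/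
noncomputable def RmaxW (μ : Measure ℝ) (m ε x : ℝ) : ℝ :=
  conv2 (fun y => m + callFn μ (y + ε) - (meanM μ - ε)) (fun y => callFn μ (y - ε)) x

/-- Right derivative. -/
noncomputable def rderiv (f : ℝ → ℝ) (x : ℝ) : ℝ := derivWithin f (Set.Ioi x) x

/-- `R` is a call function: convex, nonincreasing, tending to `0` at `+∞`, and
`R(x)+x` has a finite limit at `−∞`. -/
def IsCallFn (R : ℝ → ℝ) : Prop :=
  ConvexOn ℝ Set.univ R ∧ Antitone R ∧
    Tendsto R atTop (nhds 0) ∧ ∃ c : ℝ, Tendsto (fun x => R x + x) atBot (nhds c)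

/-- Stop-loss distance, valued in `[0,∞]`. -/
noncomputable def dSL (μ ν : Measure ℝ) : ℝ≥0∞ :=
  ⨆ x : ℝ, ENNReal.ofReal |callFn μ x - callFn ν x|

/-- Lévy distance. -/
noncomputable def dLevy (μ ν : Measure ℝ) : ℝ≥0∞ :=
  sInf (ENNReal.ofReal '' {h : ℝ | 0 < h ∧ ∀ x : ℝ,
    cdfM μ (x - h) - h ≤ cdfM ν x ∧ cdfM ν x ≤ cdfM μ (x + h) + h})

/-- Prokhorov distance on ℝ. -/
noncomputable def dProk (μ ν : Measure ℝ) : ℝ≥0∞ :=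
  sInf (ENNReal.ofReal '' {h : ℝ | 0 < h ∧ ∀ A : Set ℝ, IsClosed A →
    ν A ≤ μ (Metric.cthickening h A) + ENNReal.ofReal h})

/-- Modified Lévy distance with parameter `p`. -/
noncomputable def dLevyMod (p : ℝ) (μ ν : Measure ℝ) : ℝ≥0∞ :=
  sInf (ENNReal.ofReal '' {h : ℝ | 0 < h ∧ ∀ x : ℝ,
    cdfM μ (x - h) - p ≤ cdfM ν x ∧ cdfM ν x ≤ cdfM μ (x + h) + p})

/-- Modified Prokhorov distance with parameter `p`. -/
noncomputable def dProkMod (p : ℝ) (μ ν : Measure ℝ) : ℝ≥0∞ :=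
  sInf (ENNReal.ofReal '' {h : ℝ | 0 < h ∧ ∀ A : Set ℝ, IsClosed A →
    ν A ≤ μ (Metric.cthickening h A) + ENNReal.ofReal p})

/-!
If `F_μ(x) ≤ F_ν(x + δ)` for all `x`, then `ν((x + δ + t, ∞)) ≤ μ((x + t, ∞))`, and the layer cake
formula `R_μ(x) = ∫_0^∞ μ((x + t, ∞)) dt` gives `R_ν(x + δ) ≤ R_μ(x)`. A bound `W∞(μ₁, μ₂) ≤ ε`
yields this domination with `δ = ε` in both directions, since distribution functions are right
continuous. The mean bound follows from `Eν - x ≤ R_ν(x)` and `R_μ(x) + x → Eμ` as `x → -∞`.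
-/
open ProbabilityTheory Topology

lemma StieltjesFunction.le_of_forall_lt_imp_le (f : StieltjesFunction ℝ) {a c : ℝ}
    (h : ∀ r, a < r → c ≤ f r) : c ≤ f a :=
  ge_of_tendsto ((f.right_continuous a).mono Ioi_subset_Ici_self)
    (eventually_nhdsWithin_of_forall h)

lemma cdfM_eq_cdf (μ : Measure ℝ) [IsProbabilityMeasure μ] : cdfM μ = cdf μ :=
  funext fun x => (cdf_eq_real μ x).symm

lemma exists_lt_of_winf_le {μ ν : Measure ℝ} {ε r : ℝ} (hε : 0 ≤ ε)
    (h : Winf μ ν ≤ ENNReal.ofReal ε) (hr : ε < r) :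
    ∃ δ < r, ∀ x, cdfM μ (x - δ) ≤ cdfM ν x ∧ cdfM ν x ≤ cdfM μ (x + δ) := by
  have hlt : Winf μ ν < ENNReal.ofReal r :=
    h.trans_lt ((ENNReal.ofReal_lt_ofReal_iff (hε.trans_lt hr)).2 hr)
  obtain ⟨_, ⟨δ, ⟨-, hcdf⟩, rfl⟩, hδr⟩ := sInf_lt_iff.1 hlt
  exact ⟨δ, (ENNReal.ofReal_lt_ofReal_iff (hε.trans_lt hr)).1 hδr, hcdf⟩

lemma cdfM_le_cdfM_add_of_winf_le {μ ν : Measure ℝ} [IsProbabilityMeasure μ]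
    [IsProbabilityMeasure ν] {ε : ℝ} (hε : 0 ≤ ε) (h : Winf μ ν ≤ ENNReal.ofReal ε) (x : ℝ) :
    cdfM μ x ≤ cdfM ν (x + ε) ∧ cdfM ν x ≤ cdfM μ (x + ε) := by
  rw [cdfM_eq_cdf, cdfM_eq_cdf]
  refine ⟨(cdf ν).le_of_forall_lt_imp_le fun r hr => ?_,
    (cdf μ).le_of_forall_lt_imp_le fun r hr => ?_⟩
  · obtain ⟨δ, hδr, hcdf⟩ := exists_lt_of_winf_le hε h (show ε < r - x by linarith)
    simp only [cdfM_eq_cdf] at hcdf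
    calc cdf μ x = cdf μ (x + δ - δ) := by rw [add_sub_cancel_right]
      _ ≤ cdf ν (x + δ) := (hcdf _).1
      _ ≤ cdf ν r := monotone_cdf ν (by linarith)
  · obtain ⟨δ, hδr, hcdf⟩ := exists_lt_of_winf_le hε h (show ε < r - x by linarith)
    simp only [cdfM_eq_cdf] at hcdf
    exact (hcdf x).2.trans (monotone_cdf μ (by linarith))

lemma integrable_max_sub_const {μ : Measure ℝ} [IsFiniteMeasure μ]
    (hμ : Integrable (fun y => y) μ) (x : ℝ) : Integrable (fun y => max (y - x) 0) μ :=
  (hμ.sub (integrable_const x)).sup (integrable_const 0)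

lemma lintegral_ofReal_max_sub_const (μ : Measure ℝ) (x : ℝ) :
    ∫⁻ y, ENNReal.ofReal (max (y - x) 0) ∂μ = ∫⁻ t in Ioi 0, μ (Ioi (x + t)) := by
  rw [lintegral_eq_lintegral_meas_lt μ (f := fun y => max (y - x) 0)
    (.of_forall fun y => le_max_right _ _)
    ((measurable_id.sub_const x).max measurable_const).aemeasurable]
  refine setLIntegral_congr_fun measurableSet_Ioi fun t (ht : 0 < t) => congrArg μ ?_
  ext y
  simp only [mem_ofPred_eq, mem_Ioi, lt_max_iff, ht.not_gt, or_false]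
  constructor <;> intro <;> linarith

lemma callFn_eq_toReal_lintegral (μ : Measure ℝ) (x : ℝ) :
    callFn μ x = (∫⁻ t in Ioi 0, μ (Ioi (x + t))).toReal := by
  rw [← lintegral_ofReal_max_sub_const, callFn]
  exact integral_eq_lintegral_of_nonneg_ae (.of_forall fun y => le_max_right _ _)
    ((measurable_id.sub_const x).max measurable_const).aestronglyMeasurable

lemma callFn_add_le_of_cdfM_le_cdfM_add {μ ν : Measure ℝ} [IsProbabilityMeasure μ]
    [IsProbabilityMeasure ν] (hμ : Integrable (fun y => y) μ) {δ : ℝ}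
    (hcdf : ∀ x, cdfM μ x ≤ cdfM ν (x + δ)) (x : ℝ) :
    callFn ν (x + δ) ≤ callFn μ x := by
  have htail : ∀ z, ν (Ioi (z + δ)) ≤ μ (Ioi z) := fun z => by
    rw [← compl_Iic, prob_compl_eq_one_sub measurableSet_Iic, ← compl_Iic,
      prob_compl_eq_one_sub measurableSet_Iic]
    exact tsub_le_tsub_left ((ENNReal.toReal_le_toReal (measure_ne_top _ _)
      (measure_ne_top _ _)).1 (hcdf z)) 1
  have hfin : ∫⁻ t in Ioi 0, μ (Ioi (x + t)) ≠ ∞ := by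
    rw [← lintegral_ofReal_max_sub_const]
    exact ((hasFiniteIntegral_iff_ofReal (.of_forall fun y => le_max_right _ _)).1
      (integrable_max_sub_const hμ x).hasFiniteIntegral).ne
  rw [callFn_eq_toReal_lintegral, callFn_eq_toReal_lintegral]
  refine ENNReal.toReal_mono hfin (lintegral_mono fun t => ?_)
  simpa only [add_right_comm] using htail (x + t)

lemma meanM_sub_le_callFn {μ : Measure ℝ} [IsProbabilityMeasure μ]
    (hμ : Integrable (fun y => y) μ) (x : ℝ) : meanM μ - x ≤ callFn μ x := by
  have : ∫ y, (y - x) ∂μ ≤ callFn μ x :=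
    integral_mono (hμ.sub (integrable_const x)) (integrable_max_sub_const hμ x)
      fun y => le_max_left _ _
  rwa [integral_sub hμ (integrable_const x), integral_const, smul_eq_mul, probReal_univ,
    one_mul] at this

lemma tendsto_callFn_add_atBot {μ : Measure ℝ} [IsProbabilityMeasure μ]
    (hμ : Integrable (fun y => y) μ) :
    Tendsto (fun x => callFn μ x + x) atBot (𝓝 (meanM μ)) := by
  have hmax : ∀ x, ∫ y, max y x ∂μ = callFn μ x + x := fun x => by
    have : (fun y => max y x) = fun y => max (y - x) 0 + x := funext fun y => by
      rw [← max_add_add_right, sub_add_cancel, zero_add]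
    rw [this, integral_add (integrable_max_sub_const hμ x) (integrable_const x), integral_const,
      probReal_univ, one_smul, callFn]
  simp only [← hmax]
  refine tendsto_integral_filter_of_dominated_convergence (fun y => |y|)
    (.of_forall fun x => (measurable_id.max measurable_const).aestronglyMeasurable) ?_ hμ.abs
    (.of_forall fun y => tendsto_const_nhds.congr' ?_)
  · filter_upwards [eventually_le_atBot 0] with x hx
    refine .of_forall fun y => abs_le.2 ⟨(neg_abs_le y).trans (le_max_left _ _), ?_⟩
    exact max_le (le_abs_self y) (hx.trans (abs_nonneg y))
  · filter_upwards [eventually_le_atBot y] with x hx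
    exact (max_eq_left hx).symm

lemma meanM_le_of_cdfM_le_cdfM_add {μ ν : Measure ℝ} [IsProbabilityMeasure μ]
    [IsProbabilityMeasure ν] (hμ : Integrable (fun y => y) μ) (hν : Integrable (fun y => y) ν)
    {δ : ℝ} (hcdf : ∀ x, cdfM μ x ≤ cdfM ν (x + δ)) : meanM ν ≤ meanM μ + δ := by
  have hbound : ∀ x, meanM ν - δ ≤ callFn μ x + x := fun x => by
    linarith [meanM_sub_le_callFn hν (x + δ), callFn_add_le_of_cdfM_le_cdfM_add hμ hcdf x]
  linarith [ge_of_tendsto' (tendsto_callFn_add_atBot hμ) hbound]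

/-- if `W∞(μ₁,μ₂) ≤ ε` then the call functions satisfy
`R_{μ₁}(x+ε) ≤ R_{μ₂}(x) ≤ R_{μ₁}(x−ε)` and `|Eμ₁ − Eμ₂| ≤ ε`. -/
theorem winf_le_imp_callFn_est (μ₁ μ₂ : Measure ℝ) (h₁ : MemM μ₁) (h₂ : MemM μ₂)
    (ε : ℝ) (hε : 0 ≤ ε) (h : Winf μ₁ μ₂ ≤ ENNReal.ofReal ε) :
    (∀ x : ℝ, callFn μ₁ (x + ε) ≤ callFn μ₂ x ∧ callFn μ₂ x ≤ callFn μ₁ (x - ε)) ∧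
    |meanM μ₁ - meanM μ₂| ≤ ε := by
  obtain ⟨_, hI₁⟩ := h₁
  obtain ⟨_, hI₂⟩ := h₂
  have h₁₂ : ∀ x, cdfM μ₁ x ≤ cdfM μ₂ (x + ε) := fun x => (cdfM_le_cdfM_add_of_winf_le hε h x).1
  have h₂₁ : ∀ x, cdfM μ₂ x ≤ cdfM μ₁ (x + ε) := fun x => (cdfM_le_cdfM_add_of_winf_le hε h x).2
  refine ⟨fun x => ⟨callFn_add_le_of_cdfM_le_cdfM_add hI₂ h₂₁ x, ?_⟩, abs_sub_le_iff.2 ⟨?_, ?_⟩⟩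
  · simpa using callFn_add_le_of_cdfM_le_cdfM_add hI₁ h₁₂ (x - ε)
  · linarith [meanM_le_of_cdfM_le_cdfM_add hI₂ hI₁ h₂₁]
  · linarith [meanM_le_of_cdfM_le_cdfM_add hI₁ hI₂ h₁₂]
end

section
/- For every Borel probability measure μ on ℝ and every ε ∈ [0,1]: B^L(μ,ε) = B_ε^L(μ,ε) and B^P(μ,ε) = B_ε^P(μ,ε); that is, the closed ball of radius ε around μ for the Lévy (resp. Prokhorov) distance coincides with the closed ball of radius ε around μ for the modified Lévy (resp. modified Prokhorov) distance with parameter p = ε. -/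
open MeasureTheory Filter Set
open scoped ENNReal

/-!
Both defining conditions, "`ν` is within `(h, p)` of `μ`" for a radius `h` and a slack `p`,
are monotone in `h` and in `p`, and closed in `p` from the right. Hence either ball condition
`d ≤ ε` says that the condition holds for every `h > ε` (with slack `h`, resp. `ε`). Slack `ε`
implies slack `h ≥ ε`; conversely, slack `h'` at radius `h' ∈ (ε, h]` gives slack `h'` at
radius `h`, and letting `h' ↓ ε` gives slack `ε`.
-/

lemma ge_of_forall_gt_of_continuousWithinAt {α : Type*} [TopologicalSpace α] [Preorder α]
    [ClosedIciTopology α] {f : ℝ → α} {ε : ℝ} {a : α}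
    (hf : ContinuousWithinAt f (Ioi ε) ε) (h : ∀ q, ε < q → a ≤ f q) : a ≤ f ε :=
  ge_of_tendsto hf (eventually_nhdsWithin_of_forall h)

lemma sInf_ofReal_le_ofReal_iff {P : ℝ → Prop} (hP : Monotone P) {ε : ℝ} (hε : 0 ≤ ε) :
    sInf (ENNReal.ofReal '' {h | 0 < h ∧ P h}) ≤ ENNReal.ofReal ε ↔ ∀ h, ε < h → P h := by
  constructor
  · intro hle h hεh
    obtain ⟨_, ⟨h', ⟨h'_pos, hPh'⟩, rfl⟩, hlt⟩ :=
      sInf_lt_iff.1 (hle.trans_lt ((ENNReal.ofReal_lt_ofReal_iff (hε.trans_lt hεh)).2 hεh))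
    exact hP ((ENNReal.ofReal_lt_ofReal_iff_of_nonneg h'_pos.le).1 hlt).le hPh'
  · intro hP'
    exact ge_of_forall_gt_of_continuousWithinAt ENNReal.continuous_ofReal.continuousWithinAt
      fun h hεh => sInf_le ⟨h, ⟨hε.trans_lt hεh, hP' h hεh⟩, rfl⟩

section Diagonal

variable {Q : ℝ → ℝ → Prop} {ε : ℝ}

lemma forall_gt_diag_iff (hQh : ∀ p, Monotone (Q · p)) (hQp : ∀ h, Monotone (Q h))
    (hQε : ∀ h, (∀ p, ε < p → Q h p) → Q h ε) :
    (∀ h, ε < h → Q h h) ↔ ∀ h, ε < h → Q h ε :=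
  ⟨fun H h hεh => hQε h fun p hεp =>
      hQp h (min_le_right h p) (hQh _ (min_le_left h p) (H _ (lt_min hεh hεp))),
    fun H h hεh => hQp h hεh.le (H h hεh)⟩

lemma sInf_diag_le_ofReal_iff (hε : 0 ≤ ε) (hQh : ∀ p, Monotone (Q · p))
    (hQp : ∀ h, Monotone (Q h)) (hQε : ∀ h, (∀ p, ε < p → Q h p) → Q h ε) :
    sInf (ENNReal.ofReal '' {h | 0 < h ∧ Q h h}) ≤ ENNReal.ofReal ε ↔
      sInf (ENNReal.ofReal '' {h | 0 < h ∧ Q h ε}) ≤ ENNReal.ofReal ε := by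
  rw [sInf_ofReal_le_ofReal_iff (fun a b hab => (hQh a hab).trans (hQp b hab)) hε,
    sInf_ofReal_le_ofReal_iff (hQh ε) hε]
  exact forall_gt_diag_iff hQh hQp hQε

end Diagonal

/-- `dLevy μ ν` is the infimum of the `h > 0` with `LevyBound μ ν h h`,
and `dLevyMod p μ ν` that of the `h > 0` with `LevyBound μ ν h p`. -/
def LevyBound (μ ν : Measure ℝ) (h p : ℝ) : Prop :=
  ∀ x, cdfM μ (x - h) - p ≤ cdfM ν x ∧ cdfM ν x ≤ cdfM μ (x + h) + p

/-- `dProk μ ν` is the infimum of the `h > 0` with `ProkhorovBound μ ν h h`,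
and `dProkMod p μ ν` that of the `h > 0` with `ProkhorovBound μ ν h p`. -/
def ProkhorovBound (μ ν : Measure ℝ) (h p : ℝ) : Prop :=
  ∀ A : Set ℝ, IsClosed A → ν A ≤ μ (Metric.cthickening h A) + ENNReal.ofReal p

section Bounds

variable (μ ν : Measure ℝ)

lemma cdfM_mono [IsFiniteMeasure μ] : Monotone (cdfM μ) := fun _ _ hab =>
  ENNReal.toReal_mono (measure_ne_top μ _) (measure_mono (Iic_subset_Iic.2 hab))

lemma levyBound_mono_radius [IsFiniteMeasure μ] (p : ℝ) : Monotone (LevyBound μ ν · p) := by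
  intro a b hab H x
  have hleft := cdfM_mono μ (show x - b ≤ x - a by linarith)
  have hright := cdfM_mono μ (show x + a ≤ x + b by linarith)
  obtain ⟨h₁, h₂⟩ := H x
  exact ⟨by linarith, by linarith⟩

lemma levyBound_mono_slack (h : ℝ) : Monotone (LevyBound μ ν h) := by
  intro p q hpq H x
  obtain ⟨h₁, h₂⟩ := H x
  exact ⟨by linarith, by linarith⟩

lemma levyBound_of_forall_gt {h p : ℝ} (H : ∀ q, p < q → LevyBound μ ν h q) :
    LevyBound μ ν h p := fun x =>
  ⟨sub_le_iff_le_add.2 <| ge_of_forall_gt_of_continuousWithinAt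
      (continuous_const.add continuous_id).continuousWithinAt
      fun q hpq => sub_le_iff_le_add.1 (H q hpq x).1,
    ge_of_forall_gt_of_continuousWithinAt
      (continuous_const.add continuous_id).continuousWithinAt fun q hpq => (H q hpq x).2⟩

lemma prokhorovBound_mono_radius (p : ℝ) : Monotone (ProkhorovBound μ ν · p) :=
  fun _ _ hab H A hA => (H A hA).trans (by gcongr; exact Metric.cthickening_mono hab A)

lemma prokhorovBound_mono_slack (h : ℝ) : Monotone (ProkhorovBound μ ν h) :=
  fun _ _ hpq H A hA => (H A hA).trans (by gcongr)

lemma prokhorovBound_of_forall_gt {h p : ℝ} (H : ∀ q, p < q → ProkhorovBound μ ν h q) :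
    ProkhorovBound μ ν h p := fun A hA =>
  ge_of_forall_gt_of_continuousWithinAt
    (continuous_const.add ENNReal.continuous_ofReal).continuousWithinAt fun q hpq => H q hpq A hA

lemma dLevy_le_ofReal_iff_dLevyMod_le [IsFiniteMeasure μ] {ε : ℝ} (hε : 0 ≤ ε) :
    dLevy μ ν ≤ ENNReal.ofReal ε ↔ dLevyMod ε μ ν ≤ ENNReal.ofReal ε :=
  sInf_diag_le_ofReal_iff hε (levyBound_mono_radius μ ν) (levyBound_mono_slack μ ν)
    fun _ => levyBound_of_forall_gt μ ν

lemma dProk_le_ofReal_iff_dProkMod_le {ε : ℝ} (hε : 0 ≤ ε) :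
    dProk μ ν ≤ ENNReal.ofReal ε ↔ dProkMod ε μ ν ≤ ENNReal.ofReal ε :=
  sInf_diag_le_ofReal_iff hε (prokhorovBound_mono_radius μ ν) (prokhorovBound_mono_slack μ ν)
    fun _ => prokhorovBound_of_forall_gt μ ν

end Bounds

/-- for `ε ∈ [0,1]`, the closed `ε`-balls around `μ` for the Lévy
(resp. Prokhorov) distance coincide with those for the modified Lévy
(resp. modified Prokhorov) distance with parameter `p = ε`. -/
theorem balls_eq_modified_balls (μ : Measure ℝ) [IsProbabilityMeasure μ]
    (ε : ℝ) (hε : ε ∈ Set.Icc (0:ℝ) 1) :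
    ({ν : Measure ℝ | IsProbabilityMeasure ν ∧ dLevy μ ν ≤ ENNReal.ofReal ε}
      = {ν : Measure ℝ | IsProbabilityMeasure ν ∧ dLevyMod ε μ ν ≤ ENNReal.ofReal ε}) ∧
    ({ν : Measure ℝ | IsProbabilityMeasure ν ∧ dProk μ ν ≤ ENNReal.ofReal ε}
      = {ν : Measure ℝ | IsProbabilityMeasure ν ∧ dProkMod ε μ ν ≤ ENNReal.ofReal ε}) :=
  ⟨Set.ext fun ν => and_congr_right fun _ => dLevy_le_ofReal_iff_dLevyMod_le μ ν hε.1,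
    Set.ext fun ν => and_congr_right fun _ => dProk_le_ofReal_iff_dProkMod_le μ ν hε.1⟩
end

section
/- Let μ be a Borel probability measure on ℝ, p ∈ (0,1], and m ∈ ℝ. Then the set B_p^P(μ,0) ∩ M_m is nonempty; moreover, it contains at least one measure with bounded support. -/
open MeasureTheory Filter Set
open scoped ENNReal

private lemma aux_prokMod_witness (μ : Measure ℝ) [IsProbabilityMeasure μ]
    (p : ℝ) (hp0 : 0 < p) (hp1 : p ≤ 1) (m : ℝ) :
    ∃ ν : Measure ℝ, (IsProbabilityMeasure ν ∧ Integrable (fun y : ℝ => y) ν) ∧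
      (∫ y, y ∂ν) = m ∧
      (∀ h : ℝ, 0 < h → ∀ A : Set ℝ, IsClosed A →
        ν A ≤ μ (Metric.cthickening h A) + ENNReal.ofReal p) ∧
      ∃ K : Set ℝ, Bornology.IsBounded K ∧ ν Kᶜ = 0 := by
  have hMex : ∃ M : ℝ, ENNReal.ofReal (1 - p/2) ≤ μ (Set.Icc (-M) M) := by
    have hmono : Monotone (fun n : ℕ => Set.Icc (-(n:ℝ)) (n:ℝ)) := by
      intro a b hab
      exact Set.Icc_subset_Icc (neg_le_neg (by exact_mod_cast hab)) (by exact_mod_cast hab)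
    have hUnion : (⋃ n : ℕ, Set.Icc (-(n:ℝ)) (n:ℝ)) = Set.univ := by
      ext y
      simp only [Set.mem_iUnion, Set.mem_univ, iff_true, Set.mem_Icc]
      obtain ⟨n, hn⟩ := exists_nat_ge |y|
      exact ⟨n, neg_le_of_abs_le hn, le_of_abs_le hn⟩
    have htend := tendsto_measure_iUnion_atTop (μ := μ) hmono
    rw [hUnion, measure_univ] at htend
    have hlt : ENNReal.ofReal (1 - p/2) < 1 := by
      rw [← ENNReal.ofReal_one]
      exact (ENNReal.ofReal_lt_ofReal_iff_of_nonneg (by linarith)).mpr (by linarith)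
    obtain ⟨n, hn⟩ := (htend.eventually (eventually_gt_nhds hlt)).exists
    exact ⟨n, hn.le⟩
  obtain ⟨M, hM⟩ := hMex
  set I : Set ℝ := Set.Icc (-M) M with hIdef
  have hIne : μ I ≠ ∞ := measure_ne_top μ I
  obtain ⟨t, htdef⟩ : ∃ t : ℝ, t = (μ I).toReal := ⟨_, rfl⟩
  have ht0 : 0 ≤ t := htdef ▸ ENNReal.toReal_nonneg
  have ht1 : t ≤ 1 := by
    rw [htdef]
    have h := ENNReal.toReal_mono (by simp) (prob_le_one (μ := μ) (s := I))
    simpa using h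
  have ht2 : 1 - p/2 ≤ t := by
    rw [htdef]
    exact (ENNReal.ofReal_le_iff_le_toReal hIne).mp hM
  obtain ⟨α, hαdef⟩ : ∃ a : ℝ, a = 1 - (1 - p/2) * t := ⟨_, rfl⟩
  have hα1 : p/2 ≤ α := by nlinarith
  have hα2 : α ≤ p := by nlinarith [mul_le_mul_of_nonneg_left ht2 (show (0:ℝ) ≤ 1 - p/2 by linarith), sq_nonneg p]
  have hαpos : 0 < α := by linarith
  set S : ℝ := ∫ y in I, y ∂μ with hSdef
  set c : ℝ := (m - (1 - p/2) * S) / α with hcdef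
  set ν : Measure ℝ :=
    ENNReal.ofReal (1 - p/2) • μ.restrict I + ENNReal.ofReal α • Measure.dirac c with hνdef
  have hSint : IntegrableOn (fun y : ℝ => y) I μ := continuous_id.integrableOn_Icc
  have hint1 : Integrable (fun y : ℝ => y) (ENNReal.ofReal (1 - p/2) • μ.restrict I) :=
    hSint.smul_measure ENNReal.ofReal_ne_top
  have hdirac_ae : (fun y : ℝ => y) =ᵐ[Measure.dirac c] (fun _ => c) := by
    rw [MeasureTheory.ae_dirac_eq]
    exact Filter.eventually_pure.mpr rfl
  have hint2 : Integrable (fun y : ℝ => y) (Measure.dirac c) :=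
    (integrable_const c).congr hdirac_ae.symm
  have hint2' : Integrable (fun y : ℝ => y) (ENNReal.ofReal α • Measure.dirac c) :=
    hint2.smul_measure ENNReal.ofReal_ne_top
  have hintν : Integrable (fun y : ℝ => y) ν := hint1.add_measure hint2'
  have hνuniv : ν Set.univ = 1 := by
    rw [hνdef, Measure.add_apply, Measure.smul_apply, Measure.smul_apply, smul_eq_mul,
      smul_eq_mul, Measure.restrict_apply_univ, measure_univ, mul_one,
      ← ENNReal.ofReal_toReal hIne, ← htdef,
      ← ENNReal.ofReal_mul (by linarith), ← ENNReal.ofReal_add (by nlinarith) hαpos.le]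
    norm_num [hαdef]
  have hνprob : IsProbabilityMeasure ν := ⟨hνuniv⟩
  have hmean : (∫ y, y ∂ν) = m := by
    rw [hνdef, integral_add_measure hint1 hint2', integral_smul_measure, integral_smul_measure,
      integral_dirac, ENNReal.toReal_ofReal (by linarith), ENNReal.toReal_ofReal hαpos.le]
    rw [smul_eq_mul, smul_eq_mul, ← hSdef, hcdef]
    field_simp
    ring
  have key : ∀ h : ℝ, 0 < h → ∀ A : Set ℝ, IsClosed A →
      ν A ≤ μ (Metric.cthickening h A) + ENNReal.ofReal p := by
    intro h hh A hA
    have hAm : MeasurableSet A := hA.measurableSet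
    have h1 : (ENNReal.ofReal (1 - p/2) • μ.restrict I) A ≤ μ (Metric.cthickening h A) := by
      rw [Measure.smul_apply, smul_eq_mul, Measure.restrict_apply hAm]
      calc ENNReal.ofReal (1 - p/2) * μ (A ∩ I) ≤ 1 * μ (A ∩ I) := by
            gcongr
            exact ENNReal.ofReal_le_one.mpr (by linarith)
        _ = μ (A ∩ I) := one_mul _
        _ ≤ μ (Metric.cthickening h A) :=
            measure_mono ((Set.inter_subset_left).trans (Metric.self_subset_cthickening A))
    have h2 : (ENNReal.ofReal α • Measure.dirac c) A ≤ ENNReal.ofReal p := by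
      rw [Measure.smul_apply, smul_eq_mul]
      calc ENNReal.ofReal α * Measure.dirac c A ≤ ENNReal.ofReal α * 1 := by
            gcongr
            exact prob_le_one
        _ = ENNReal.ofReal α := mul_one _
        _ ≤ ENNReal.ofReal p := ENNReal.ofReal_le_ofReal hα2
    calc ν A = (ENNReal.ofReal (1 - p/2) • μ.restrict I) A
        + (ENNReal.ofReal α • Measure.dirac c) A := Measure.add_apply _ _ _
      _ ≤ _ := add_le_add h1 h2
  refine ⟨ν, ⟨hνprob, hintν⟩, hmean, key, I ∪ {c}, ?_, ?_⟩
  · exact (Metric.isBounded_Icc _ _).union Bornology.isBounded_singleton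
  · have hKm : MeasurableSet (I ∪ {c})ᶜ :=
      (measurableSet_Icc.union (measurableSet_singleton c)).compl
    rw [hνdef, Measure.add_apply, Measure.smul_apply, Measure.smul_apply, smul_eq_mul,
      smul_eq_mul, Measure.restrict_apply hKm]
    have h1 : (I ∪ {c})ᶜ ∩ I = ∅ := by
      ext x; simp only [Set.mem_inter_iff, Set.mem_compl_iff, Set.mem_union, Set.mem_empty_iff_false]
      tauto
    have h2 : Measure.dirac c (I ∪ {c})ᶜ = 0 := by
      rw [Measure.dirac_apply' _ hKm]
      simp
    rw [h1, h2]
    simp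

/-- `B_p^P(μ,0) ∩ M_m` is nonempty and contains a measure with
bounded support. -/
theorem ball_prokMod_radius_zero_nonempty (μ : Measure ℝ) [IsProbabilityMeasure μ]
    (p : ℝ) (hp : p ∈ Set.Ioc (0:ℝ) 1) (m : ℝ) :
    (∃ ν : Measure ℝ, MemM ν ∧ meanM ν = m ∧ dProkMod p μ ν ≤ 0) ∧
    (∃ ν : Measure ℝ, MemM ν ∧ meanM ν = m ∧ dProkMod p μ ν ≤ 0 ∧
      ∃ K : Set ℝ, Bornology.IsBounded K ∧ ν Kᶜ = 0) := by
  obtain ⟨hp0, hp1⟩ := hp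
  obtain ⟨ν, hmem, hmean, key, K, hK, hK0⟩ := aux_prokMod_witness μ p hp0 hp1 m
  have hmem' : MemM ν := ⟨hmem.1, hmem.2⟩
  have hmean' : meanM ν = m := hmean
  have hdist : dProkMod p μ ν ≤ 0 := by
    refine ENNReal.le_of_forall_pos_le_add fun ε hε _ => ?_
    rw [zero_add]
    have hε' : (0:ℝ) < (ε:ℝ) := by exact_mod_cast hε
    refine le_trans (sInf_le ⟨(ε:ℝ), ⟨hε', fun A hA => key _ hε' A hA⟩, rfl⟩) ?_
    exact le_of_eq ENNReal.ofReal_coe_nnreal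
  exact ⟨⟨ν, hmem', hmean', hdist⟩, ⟨ν, hmem', hmean', hdist, K, hK, hK0⟩⟩
end

section
/- Let (μ_n)_{n∈ℕ} be a sequence of Borel probability measures on ℝ with finite first moments, let ε > 0 and p ∈ (0,1]. Then for every m ∈ ℝ there exists a peacock (ν_n)_{n∈ℕ} with mean m (i.e., Eν_n = m for all n) such that d_p^P(μ_n, ν_n) ≤ ε for all n ∈ ℕ. In particular (taking p = ε ∈ (0,1]), for every m ∈ ℝ there exists a peacock (ν_n)_{n∈ℕ} with mean m such that d^P(μ_n, ν_n) ≤ ε for all n ∈ ℕ. -/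
open MeasureTheory Filter Set
open scoped ENNReal

/-!
Put `q = p / 2`. Moving the mass of `μₙ` outside a large compact set (at most `p / 2`) to `0`
gives a compactly supported `ρₙ`, and `νₙ = (1 - q) ρₙ + (q / 2) (δ_{cₙ - sₙ} + δ_{cₙ + sₙ})`,
with `cₙ` chosen so that `νₙ` has mean `m`, satisfies `νₙ(A) ≤ μₙ(A) + p` for every `A`; hence
`d_p^P(μₙ, νₙ) = 0`.

For convex `φ`, let `β` be the slope of the chord of `φ` over `[cₖ - sₖ, cₖ + sₖ]`. Then
`x ↦ ∫ φ dνₖ + β (x - m)` dominates `φ` on `[m - q sₖ, m + q sₖ]`, so every measure of mean `m`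
supported there lies below `νₖ` in convex order. Choosing `sₖ` so large that this interval
contains the supports of all `νⱼ`, `j < k`, makes `(νₙ)` a peacock.
-/

theorem ConvexOn.add_rderiv_mul_sub_le {φ : ℝ → ℝ} (hφ : ConvexOn ℝ univ φ) (x y : ℝ) :
    φ x + rderiv φ x * (y - x) ≤ φ y := by
  have hx : x ∈ interior univ := by simp
  rcases lt_trichotomy x y with hxy | rfl | hyx
  · have h := hφ.rightDeriv_le_slope_of_mem_interior hx (mem_univ y) hxy
    rw [slope_def_field, le_div_iff₀ (sub_pos.2 hxy)] at h
    unfold rderiv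
    linarith
  · simp
  · have h := (hφ.slope_le_leftDeriv_of_mem_interior (mem_univ y) hx hyx).trans
      (hφ.leftDeriv_le_rightDeriv_of_mem_interior hx)
    rw [slope_def_field, div_le_iff₀ (sub_pos.2 hyx)] at h
    unfold rderiv
    linarith

theorem integral_add_mul_sub {ρ : Measure ℝ} [IsProbabilityMeasure ρ]
    (hρ : Integrable (fun y => y) ρ) (a b x : ℝ) :
    ∫ y, (a + b * (y - x)) ∂ρ = a + b * (meanM ρ - x) := by
  have hslope : Integrable (fun y => b * (y - x)) ρ := (hρ.sub (integrable_const x)).const_mul b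
  rw [integral_add (integrable_const a) hslope, integral_const_mul,
    integral_sub hρ (integrable_const x)]
  simp [meanM]

theorem ConvexOn.add_rderiv_mul_sub_le_integral {φ : ℝ → ℝ} (hφ : ConvexOn ℝ univ φ)
    {ρ : Measure ℝ} [IsProbabilityMeasure ρ] (hρ : Integrable (fun y => y) ρ)
    (hφρ : Integrable φ ρ) (x : ℝ) :
    φ x + rderiv φ x * (meanM ρ - x) ≤ ∫ y, φ y ∂ρ := by
  rw [← integral_add_mul_sub hρ]
  exact integral_mono ((integrable_const _).add ((hρ.sub (integrable_const x)).const_mul _)) hφρ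
    (hφ.add_rderiv_mul_sub_le x)

theorem ENNReal.ofReal_half_mul_two (q : ℝ) : ENNReal.ofReal (q / 2) * 2 = ENNReal.ofReal q := by
  rw [← ENNReal.ofReal_ofNat 2, ← ENNReal.ofReal_mul' (by norm_num), div_mul_cancel₀ _ two_ne_zero]

noncomputable def twoAtomMix (q : ℝ) (ρ : Measure ℝ) (c s : ℝ) : Measure ℝ :=
  ENNReal.ofReal (1 - q) • ρ +
    ENNReal.ofReal (q / 2) • (Measure.dirac (c - s) + Measure.dirac (c + s))

section twoAtomMix

variable {q : ℝ} {ρ : Measure ℝ} {c s : ℝ}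

lemma isProbabilityMeasure_twoAtomMix [IsProbabilityMeasure ρ] (hq0 : 0 ≤ q) (hq1 : q ≤ 1) :
    IsProbabilityMeasure (twoAtomMix q ρ c s) := by
  constructor
  simp only [twoAtomMix, Measure.add_apply, Measure.smul_apply, measure_univ, smul_eq_mul, mul_one]
  rw [one_add_one_eq_two, ENNReal.ofReal_half_mul_two, ← ENNReal.ofReal_add (by linarith) hq0,
    sub_add_cancel, ENNReal.ofReal_one]

lemma integrable_twoAtomMix {f : ℝ → ℝ} (hf : Integrable f ρ) :
    Integrable f (twoAtomMix q ρ c s) :=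
  (hf.smul_measure ENNReal.ofReal_ne_top).add_measure
    (((integrable_dirac (by simp)).add_measure (integrable_dirac (by simp))).smul_measure
      ENNReal.ofReal_ne_top)

lemma integral_twoAtomMix {f : ℝ → ℝ} (hf : Integrable f ρ) (hq0 : 0 ≤ q) (hq1 : q ≤ 1) :
    ∫ y, f y ∂(twoAtomMix q ρ c s) = (1 - q) * ∫ y, f y ∂ρ + q / 2 * (f (c - s) + f (c + s)) := by
  have h1 : Integrable f (Measure.dirac (c - s)) := integrable_dirac (by simp)
  have h2 : Integrable f (Measure.dirac (c + s)) := integrable_dirac (by simp)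
  rw [twoAtomMix, integral_add_measure (hf.smul_measure ENNReal.ofReal_ne_top)
    ((h1.add_measure h2).smul_measure ENNReal.ofReal_ne_top), integral_smul_measure,
    integral_smul_measure, integral_add_measure h1 h2, integral_dirac, integral_dirac,
    ENNReal.toReal_ofReal (by linarith), ENNReal.toReal_ofReal (by linarith), smul_eq_mul,
    smul_eq_mul]

lemma meanM_twoAtomMix (hρ : Integrable (fun y => y) ρ) (hq0 : 0 ≤ q) (hq1 : q ≤ 1) :
    meanM (twoAtomMix q ρ c s) = (1 - q) * meanM ρ + q * c := by
  rw [meanM, integral_twoAtomMix hρ hq0 hq1, meanM]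
  ring

lemma twoAtomMix_apply_le (hq0 : 0 ≤ q) (A : Set ℝ) :
    twoAtomMix q ρ c s A ≤ ρ A + ENNReal.ofReal q := by
  simp only [twoAtomMix, Measure.add_apply, Measure.smul_apply, smul_eq_mul]
  calc ENNReal.ofReal (1 - q) * ρ A
        + ENNReal.ofReal (q / 2) * (Measure.dirac (c - s) A + Measure.dirac (c + s) A)
      ≤ 1 * ρ A + ENNReal.ofReal (q / 2) * (1 + 1) := by
        gcongr
        · exact ENNReal.ofReal_le_one.2 (by linarith)
        all_goals exact prob_le_one
    _ = ρ A + ENNReal.ofReal q := by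
        rw [one_mul, one_add_one_eq_two, ENNReal.ofReal_half_mul_two]

lemma ae_twoAtomMix {P : ℝ → Prop} (hρ : ∀ᵐ x ∂ρ, P x) (hl : P (c - s)) (hr : P (c + s)) :
    ∀ᵐ x ∂(twoAtomMix q ρ c s), P x := by
  simp only [twoAtomMix, ae_add_measure_iff]
  exact ⟨Measure.ae_smul_measure hρ _,
    Measure.ae_smul_measure (by simp [ae_dirac_eq, hl, hr]) _⟩

end twoAtomMix

theorem ConvexOn.le_integral_twoAtomMix_add {φ : ℝ → ℝ} (hφ : ConvexOn ℝ univ φ)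
    {ρ : Measure ℝ} [IsProbabilityMeasure ρ] (hρ : Integrable (fun y => y) ρ)
    (hφρ : Integrable φ ρ) {q c s : ℝ} (hq0 : 0 ≤ q) (hq1 : q ≤ 1) (hs : 0 < s) {x : ℝ}
    (hx : |x - ((1 - q) * meanM ρ + q * c)| ≤ q * s) :
    φ x ≤ ∫ y, φ y ∂(twoAtomMix q ρ c s)
      + (φ (c + s) - φ (c - s)) / (2 * s) * (x - ((1 - q) * meanM ρ + q * c)) := by
  set m := (1 - q) * meanM ρ + q * c with hm
  obtain ⟨d, hxd⟩ : ∃ d, x - m = 2 * s * d := ⟨(x - m) / (2 * s), by field_simp⟩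
  have hd : |d| ≤ q / 2 := by
    rw [hxd, abs_mul, abs_of_pos (by positivity : 0 < 2 * s)] at hx
    nlinarith
  obtain ⟨hdl, hdr⟩ := abs_le.1 hd
  -- The weights `1 - q`, `q / 2 + d`, `q / 2 - d` on `ρ`, `c + s`, `c - s` have barycentre `x`,
  -- so the supporting line of `φ` at `x` averages back to `φ x`.
  have hmean := mul_le_mul_of_nonneg_left (hφ.add_rderiv_mul_sub_le_integral hρ hφρ x)
    (by linarith : 0 ≤ 1 - q)
  have hright := mul_le_mul_of_nonneg_left (hφ.add_rderiv_mul_sub_le x (c + s))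
    (by linarith : 0 ≤ q / 2 + d)
  have hleft := mul_le_mul_of_nonneg_left (hφ.add_rderiv_mul_sub_le x (c - s))
    (by linarith : 0 ≤ q / 2 - d)
  have hbary : (1 - q) * (meanM ρ - x) + (q / 2 + d) * (c + s - x) + (q / 2 - d) * (c - s - x)
      = 0 := by
    linear_combination hm - hxd
  have hslope : (φ (c + s) - φ (c - s)) / (2 * s) * (x - m) = (φ (c + s) - φ (c - s)) * d := by
    rw [hxd]; field_simp
  rw [integral_twoAtomMix hφρ hq0 hq1, hslope]
  linear_combination hmean + hright + hleft - rderiv φ x * hbary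

theorem convexOrder_twoAtomMix {μ ρ : Measure ℝ} [IsProbabilityMeasure μ] [IsProbabilityMeasure ρ]
    (hμ : Integrable (fun y => y) μ) (hρ : Integrable (fun y => y) ρ) {q c s : ℝ}
    (hq0 : 0 ≤ q) (hq1 : q < 1) (hs : 0 < s) (hmean : meanM μ = (1 - q) * meanM ρ + q * c)
    (hsupp : ∀ᵐ x ∂μ, |x - meanM μ| ≤ q * s) :
    ConvexOrder μ (twoAtomMix q ρ c s) := by
  intro φ hφ hφμ hφν
  have hφρ : Integrable φ ρ := by
    refine (integrable_smul_measure (c := ENNReal.ofReal (1 - q)) ?_ ENNReal.ofReal_ne_top).1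
      (hφν.mono_measure (Measure.le_add_right le_rfl))
    simpa using hq1
  set β := (φ (c + s) - φ (c - s)) / (2 * s)
  calc ∫ y, φ y ∂μ ≤ ∫ y, (∫ z, φ z ∂(twoAtomMix q ρ c s) + β * (y - meanM μ)) ∂μ := by
        refine integral_mono_ae hφμ
          ((integrable_const _).add ((hμ.sub (integrable_const _)).const_mul _))
          (hsupp.mono fun x hx => ?_)
        rw [hmean] at hx ⊢
        exact hφ.le_integral_twoAtomMix_add hρ hφρ hq0 hq1.le hs hx
    _ = ∫ z, φ z ∂(twoAtomMix q ρ c s) := by simp [integral_add_mul_sub hμ]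

theorem exists_pos_seq_add_le_mul (b : ℕ → ℝ) {q : ℝ} (hq : 0 < q) :
    ∃ s : ℕ → ℝ, (∀ n, 0 < s n) ∧ ∀ j k, j < k → s j + b j ≤ q * s k := by
  let s : ℕ → ℝ := fun n => Nat.rec 1 (fun i si => si + (si + |b i|) / q) n
  have hsucc : ∀ n, s (n + 1) = s n + (s n + |b n|) / q := fun _ => rfl
  have hpos : ∀ n, 0 < s n := by
    intro n
    induction n with
    | zero => exact one_pos
    | succ n ih => rw [hsucc]; positivity
  have hmono : Monotone s := monotone_nat_of_le_succ fun n => by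
    rw [hsucc]; linarith [div_nonneg (add_nonneg (hpos n).le (abs_nonneg (b n))) hq.le]
  refine ⟨s, hpos, fun j k hjk => ?_⟩
  calc s j + b j ≤ q * s j + (s j + |b j|) := by linarith [mul_pos hq (hpos j), le_abs_self (b j)]
    _ = q * s (j + 1) := by rw [hsucc]; field_simp
    _ ≤ q * s k := mul_le_mul_of_nonneg_left (hmono hjk) hq.le

noncomputable def collapseCompl {α : Type*} [MeasurableSpace α] (μ : Measure α) (K : Set α)
    (x₀ : α) : Measure α :=
  μ.restrict K + μ Kᶜ • Measure.dirac x₀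

section collapseCompl

variable {α : Type*} [MeasurableSpace α] {μ : Measure α} {K : Set α} {x₀ : α}

lemma isProbabilityMeasure_collapseCompl [IsProbabilityMeasure μ] (hK : MeasurableSet K) :
    IsProbabilityMeasure (collapseCompl μ K x₀) := by
  constructor
  simp only [collapseCompl, Measure.add_apply, Measure.restrict_apply_univ, Measure.smul_apply,
    measure_univ, smul_eq_mul, mul_one, measure_add_measure_compl hK]

lemma collapseCompl_apply_le (A : Set α) : collapseCompl μ K x₀ A ≤ μ A + μ Kᶜ := by
  simp only [collapseCompl, Measure.add_apply, Measure.smul_apply, smul_eq_mul]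
  gcongr
  · exact Measure.restrict_le_self
  · exact mul_le_of_le_one_right' prob_le_one

lemma ae_mem_collapseCompl [MeasurableSingletonClass α] (hK : MeasurableSet K) :
    ∀ᵐ x ∂(collapseCompl μ K x₀), x ∈ insert x₀ K := by
  simp only [collapseCompl, ae_add_measure_iff]
  exact ⟨(ae_restrict_mem hK).mono fun x hx => mem_insert_of_mem x₀ hx,
    Measure.ae_smul_measure (by simp [ae_dirac_eq]) _⟩

end collapseCompl

def IsPeacockWithMean (ν : ℕ → Measure ℝ) (m : ℝ) : Prop :=
  (∀ n, MemM (ν n)) ∧ (∀ n, meanM (ν n) = m) ∧ ∀ j k, j ≤ k → ConvexOrder (ν j) (ν k)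

theorem exists_peacock_le_add_of_bounded (ρ : ℕ → Measure ℝ) [∀ n, IsProbabilityMeasure (ρ n)]
    (hbdd : ∀ n, ∃ R, ∀ᵐ x ∂ρ n, |x| ≤ R) {q : ℝ} (hq0 : 0 < q) (hq1 : q < 1) (m : ℝ) :
    ∃ ν : ℕ → Measure ℝ, IsPeacockWithMean ν m ∧ ∀ n A, ν n A ≤ ρ n A + ENNReal.ofReal q := by
  choose R hR using hbdd
  have hρ : ∀ n, Integrable (fun y => y) (ρ n) := fun n =>
    Integrable.of_bound aestronglyMeasurable_id (R n) (by simpa using hR n)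
  set c : ℕ → ℝ := fun n => (m - (1 - q) * meanM (ρ n)) / q
  have hc : ∀ n, (1 - q) * meanM (ρ n) + q * c n = m := fun n => by simp only [c]; field_simp; ring
  obtain ⟨s, hs0, hs⟩ := exists_pos_seq_add_le_mul (fun n => R n + |c n| + |m|) hq0
  set ν := fun n => twoAtomMix q (ρ n) (c n) (s n)
  have hprob : ∀ n, IsProbabilityMeasure (ν n) := fun n =>
    isProbabilityMeasure_twoAtomMix hq0.le hq1.le
  have hint : ∀ n, Integrable (fun y => y) (ν n) := fun n => integrable_twoAtomMix (hρ n)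
  have hmean : ∀ n, meanM (ν n) = m := fun n =>
    (meanM_twoAtomMix (hρ n) hq0.le hq1.le).trans (hc n)
  have hsupp : ∀ n, ∀ᵐ x ∂ν n, |x| ≤ R n + |c n| + s n := by
    intro n
    have hR0 : 0 ≤ R n := let ⟨x, hx⟩ := (hR n).exists; (abs_nonneg x).trans hx
    refine ae_twoAtomMix ((hR n).mono fun x hx => ?_) ?_ ?_
    · linarith [abs_nonneg (c n), hs0 n]
    · linarith [abs_sub (c n) (s n), abs_of_pos (hs0 n)]
    · linarith [abs_add_le (c n) (s n), abs_of_pos (hs0 n)]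
  refine ⟨ν, ⟨fun n => ⟨hprob n, hint n⟩, hmean, fun j k hjk => ?_⟩,
    fun n A => twoAtomMix_apply_le hq0.le A⟩
  rcases hjk.lt_or_eq with hjk | rfl
  · refine convexOrder_twoAtomMix (hint j) (hρ k) hq0.le hq1 (hs0 k)
      ((hmean j).trans (hc k).symm) ((hsupp j).mono fun x hx => ?_)
    rw [hmean j]
    linarith [abs_sub x m, hs j k hjk]
  · exact fun φ _ _ _ => le_rfl

theorem exists_peacock_le_add (μ : ℕ → Measure ℝ) [∀ n, IsProbabilityMeasure (μ n)] {p : ℝ}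
    (hp0 : 0 < p) (hp1 : p ≤ 1) (m : ℝ) :
    ∃ ν : ℕ → Measure ℝ, IsPeacockWithMean ν m ∧ ∀ n A, ν n A ≤ μ n A + ENNReal.ofReal p := by
  choose K hK hKμ using fun n =>
    isTightMeasureSet_iff_exists_isCompact_measure_compl_le.1
      (isTightMeasureSet_singleton (μ := μ n)) _ (ENNReal.ofReal_pos.2 (half_pos hp0))
  have := fun n => isProbabilityMeasure_collapseCompl (μ := μ n) (x₀ := 0) (hK n).measurableSet
  have hbdd : ∀ n, ∃ R, ∀ᵐ x ∂collapseCompl (μ n) (K n) 0, |x| ≤ R := fun n =>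
    let ⟨R, hR⟩ := ((hK n).insert 0).isBounded.exists_norm_le
    ⟨R, (ae_mem_collapseCompl (hK n).measurableSet).mono fun x hx => hR x hx⟩
  obtain ⟨ν, hν, hle⟩ := exists_peacock_le_add_of_bounded _ hbdd (half_pos hp0) (by linarith) m
  refine ⟨ν, hν, fun n A => ?_⟩
  calc ν n A ≤ collapseCompl (μ n) (K n) 0 A + ENNReal.ofReal (p / 2) := hle n A
    _ ≤ μ n A + ENNReal.ofReal (p / 2) + ENNReal.ofReal (p / 2) := by
        gcongr
        exact (collapseCompl_apply_le A).trans (by gcongr; exact hKμ n _ rfl)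
    _ = μ n A + ENNReal.ofReal p := by
        rw [add_assoc, ← ENNReal.ofReal_add (by positivity) (by positivity), add_halves]

theorem dProkMod_le_ofReal {p ε : ℝ} {μ ν : Measure ℝ} (hε : 0 < ε)
    (h : ∀ A, IsClosed A → ν A ≤ μ A + ENNReal.ofReal p) : dProkMod p μ ν ≤ ENNReal.ofReal ε :=
  sInf_le ⟨ε, ⟨hε, fun A hA =>
    (h A hA).trans (by gcongr; exact Metric.self_subset_cthickening A)⟩, rfl⟩

theorem dProk_le_ofReal {ε : ℝ} {μ ν : Measure ℝ} (hε : 0 < ε)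
    (h : ∀ A, IsClosed A → ν A ≤ μ A + ENNReal.ofReal ε) : dProk μ ν ≤ ENNReal.ofReal ε :=
  sInf_le ⟨ε, ⟨hε, fun A hA =>
    (h A hA).trans (by gcongr; exact Metric.self_subset_cthickening A)⟩, rfl⟩

/-- for any sequence in `M`, any `ε > 0`, `p ∈ (0,1]` and any mean `m`,
there is a peacock with mean `m` within modified Prokhorov distance
`d_p^P ≤ ε`; in particular (taking `p = ε ∈ (0,1]`), within Prokhorov distance
`d^P ≤ ε`. -/
theorem peacock_within_prokhorov (μ : ℕ → Measure ℝ) (hμ : ∀ n, MemM (μ n))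
    (ε p : ℝ) (hε : 0 < ε) (hp : p ∈ Set.Ioc (0:ℝ) 1) (m : ℝ) :
    (∃ ν : ℕ → Measure ℝ, (∀ n, MemM (ν n)) ∧ (∀ n, meanM (ν n) = m) ∧
        (∀ j k : ℕ, j ≤ k → ConvexOrder (ν j) (ν k)) ∧
        (∀ n, dProkMod p (μ n) (ν n) ≤ ENNReal.ofReal ε)) ∧
    (ε ≤ 1 → ∃ ν : ℕ → Measure ℝ, (∀ n, MemM (ν n)) ∧ (∀ n, meanM (ν n) = m) ∧
        (∀ j k : ℕ, j ≤ k → ConvexOrder (ν j) (ν k)) ∧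
        (∀ n, dProk (μ n) (ν n) ≤ ENNReal.ofReal ε)) := by
  have := fun n => (hμ n).1
  refine ⟨?_, fun hε1 => ?_⟩
  · obtain ⟨ν, ⟨hM, hmean, horder⟩, hle⟩ := exists_peacock_le_add μ hp.1 hp.2 m
    exact ⟨ν, hM, hmean, horder, fun n => dProkMod_le_ofReal hε fun A _ => hle n A⟩
  · obtain ⟨ν, ⟨hM, hmean, horder⟩, hle⟩ := exists_peacock_le_add μ hε hε1 m
    exact ⟨ν, hM, hmean, horder, fun n => dProk_le_ofReal hε fun A _ => hle n A⟩
end
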